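/- arXiv:2411.11028 — 2 statements merged into one kernel-verified Lean document; each statement's English description precedes it below -/
import Mathlib

section
/- (Corollary 1, inequality (32): surrogate for the common finite-blocklength rate with fixed precoders and variable channels.) Fix precoders {W̄} = {W̄_i, W̄_{ij}} and reference channels {H̄_{lk,i}}. Assume σ² > 0, n > 0, q_c ≥ 0, N_u ≤ N_BS, and, for the pair (l,k) considered, ζ̄_{c,lk} := 2 Tr(S̄_{c,lk}(S̄_{c,lk} + D̄_{c,lk})^{-1}) > 0, where barred quantities S̄, D̄ are evaluated at ({H̄}, {W̄}). Then for every choice of channel matrices {H_{lk,i}} ⊂ ℂ^{N_u×N_BS} (in particular those induced by any feasible RIS coefficients), with S_{c,lk}, D_{c,lk}, r_{c,lk} evaluated at ({H}, {W̄}): r_{c,lk} ≥ a_{c,lk} + 2 Σ_{i=1}^{L} Σ_{j=1}^{K} Re Tr(A_{c,lk,ij} W̄_{ij}^H H_{lk,i}^H) + 2 Σ_{i=1}^{L} Re Tr(A_{c,lk,i} W̄_{i}^H H_{lk,i}^H) − Re Tr(B_{c,lk} (H_{lk,l}W̄_{l}W̄_{l}^H H_{lk,l}^H + D_{c,lk})),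 where a_{c,lk} = log det(I + D̄_{c,lk}^{-1} S̄_{c,lk}) − Tr(D̄_{c,lk}^{-1} S̄_{c,lk}) − (q_c/(2√n))·(√(ζ̄_{c,lk}) + 2 N_u/√(ζ̄_{c,lk})); A_{c,lk,ij} = (q_c/√(n·ζ̄_{c,lk})) · (S̄_{c,lk} + D̄_{c,lk})^{-1} H̄_{lk,i} W̄_{ij} for all (i,j); A_{c,lk,i} = D̄_{c,lk}^{-1} H̄_{lk,l} W̄_{l} if i = l, and A_{c,lk,i} = (q_c/√(n·ζ̄_{c,lk})) · (S̄_{c,lk} + D̄_{c,lk})^{-1} H̄_{lk,i} W̄_{i} otherwise; and B_{c,lk} = D̄_{c,lk}^{-1} − (S̄_{c,lk} + D̄_{c,lk})^{-1} + (q_c/√(n·ζ̄_{c,lk})) · (S̄_{c,lk} + D̄_{c,lk})^{-1} D̄_{c,lk} (S̄_{c,lk} + D̄_{c,lk})^{-1}. (The paper's constant I = min(N_BS, N_u) equals N_u under the assumption N_u ≤ N_BS.) -/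
open Matrix Finset
open scoped ComplexOrder

noncomputable section RSMA

variable {L K Nu NBS : ℕ}

/-- Transmit covariance `C_i = W_iW_iᴴ + Σ_j W_{ij}W_{ij}ᴴ` of base station `i`. -/
def Cmat (Wc : Fin L → Matrix (Fin NBS) (Fin NBS) ℂ)
    (Wp : Fin L → Fin K → Matrix (Fin NBS) (Fin NBS) ℂ) (i : Fin L) :
    Matrix (Fin NBS) (Fin NBS) ℂ :=
  Wc i * (Wc i)ᴴ + ∑ j : Fin K, Wp i j * (Wp i j)ᴴ

/-- Private-signal covariance `S_{lk} = H_{lk,l}W_{lk}(H_{lk,l}W_{lk})ᴴ`. -/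
def Smat (H : Fin L → Fin K → Fin L → Matrix (Fin Nu) (Fin NBS) ℂ)
    (Wp : Fin L → Fin K → Matrix (Fin NBS) (Fin NBS) ℂ)
    (l : Fin L) (k : Fin K) : Matrix (Fin Nu) (Fin Nu) ℂ :=
  (H l k l * Wp l k) * (H l k l * Wp l k)ᴴ

/-- Common-signal covariance `S_{c,lk} = H_{lk,l}W_{l}(H_{lk,l}W_{l})ᴴ`. -/
def Scmat (H : Fin L → Fin K → Fin L → Matrix (Fin Nu) (Fin NBS) ℂ)
    (Wc : Fin L → Matrix (Fin NBS) (Fin NBS) ℂ)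
    (l : Fin L) (k : Fin K) : Matrix (Fin Nu) (Fin Nu) ℂ :=
  (H l k l * Wc l) * (H l k l * Wc l)ᴴ

/-- Interference-plus-noise covariance
`D_{lk} = σ²I + Σ_{j≠k} H_{lk,l}W_{lj}(H_{lk,l}W_{lj})ᴴ + Σ_{i≠l} H_{lk,i}C_iH_{lk,i}ᴴ`. -/
def Dmat (σ2 : ℝ) (H : Fin L → Fin K → Fin L → Matrix (Fin Nu) (Fin NBS) ℂ)
    (Wc : Fin L → Matrix (Fin NBS) (Fin NBS) ℂ)
    (Wp : Fin L → Fin K → Matrix (Fin NBS) (Fin NBS) ℂ)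
    (l : Fin L) (k : Fin K) : Matrix (Fin Nu) (Fin Nu) ℂ :=
  (σ2 : ℂ) • (1 : Matrix (Fin Nu) (Fin Nu) ℂ)
    + ∑ j ∈ Finset.univ.erase k, (H l k l * Wp l j) * (H l k l * Wp l j)ᴴ
    + ∑ i ∈ Finset.univ.erase l, H l k i * Cmat Wc Wp i * (H l k i)ᴴ

/-- `D_{c,lk} = D_{lk} + S_{lk}`. -/
def Dcmat (σ2 : ℝ) (H : Fin L → Fin K → Fin L → Matrix (Fin Nu) (Fin NBS) ℂ)
    (Wc : Fin L → Matrix (Fin NBS) (Fin NBS) ℂ)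
    (Wp : Fin L → Fin K → Matrix (Fin NBS) (Fin NBS) ℂ)
    (l : Fin L) (k : Fin K) : Matrix (Fin Nu) (Fin Nu) ℂ :=
  Dmat σ2 H Wc Wp l k + Smat H Wp l k

/-- Channel dispersion of the private message: `ζ'_{lk} = 2 Tr(S_{lk} D_{c,lk}⁻¹)`. -/
def zetaP (σ2 : ℝ) (H : Fin L → Fin K → Fin L → Matrix (Fin Nu) (Fin NBS) ℂ)
    (Wc : Fin L → Matrix (Fin NBS) (Fin NBS) ℂ)
    (Wp : Fin L → Fin K → Matrix (Fin NBS) (Fin NBS) ℂ)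
    (l : Fin L) (k : Fin K) : ℝ :=
  2 * ((Smat H Wp l k * (Dcmat σ2 H Wc Wp l k)⁻¹).trace).re

/-- Channel dispersion of the common message:
`ζ_{c,lk} = 2 Tr(S_{c,lk}(S_{c,lk} + D_{c,lk})⁻¹)`. -/
def zetaC (σ2 : ℝ) (H : Fin L → Fin K → Fin L → Matrix (Fin Nu) (Fin NBS) ℂ)
    (Wc : Fin L → Matrix (Fin NBS) (Fin NBS) ℂ)
    (Wp : Fin L → Fin K → Matrix (Fin NBS) (Fin NBS) ℂ)
    (l : Fin L) (k : Fin K) : ℝ :=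
  2 * ((Scmat H Wc l k * (Scmat H Wc l k + Dcmat σ2 H Wc Wp l k)⁻¹).trace).re

/-- Finite-blocklength private rate
`r_{p,lk} = log det(I + D_{lk}⁻¹S_{lk}) − q_p √(2Tr(S_{lk}D_{c,lk}⁻¹)/n)`. -/
def rpRate (σ2 nn qp : ℝ) (H : Fin L → Fin K → Fin L → Matrix (Fin Nu) (Fin NBS) ℂ)
    (Wc : Fin L → Matrix (Fin NBS) (Fin NBS) ℂ)
    (Wp : Fin L → Fin K → Matrix (Fin NBS) (Fin NBS) ℂ)
    (l : Fin L) (k : Fin K) : ℝ :=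
  Real.log ((1 + (Dmat σ2 H Wc Wp l k)⁻¹ * Smat H Wp l k).det.re)
    - qp * Real.sqrt (zetaP σ2 H Wc Wp l k / nn)

/-- Finite-blocklength common rate
`r_{c,lk} = log det(I + D_{c,lk}⁻¹S_{c,lk}) − q_c √(2Tr(S_{c,lk}(S_{c,lk}+D_{c,lk})⁻¹)/n)`. -/
def rcRate (σ2 nn qc : ℝ) (H : Fin L → Fin K → Fin L → Matrix (Fin Nu) (Fin NBS) ℂ)
    (Wc : Fin L → Matrix (Fin NBS) (Fin NBS) ℂ)
    (Wp : Fin L → Fin K → Matrix (Fin NBS) (Fin NBS) ℂ)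
    (l : Fin L) (k : Fin K) : ℝ :=
  Real.log ((1 + (Dcmat σ2 H Wc Wp l k)⁻¹ * Scmat H Wc l k).det.re)
    - qc * Real.sqrt (zetaC σ2 H Wc Wp l k / nn)

/-- Constant term `a_{c,lk}` of the common-rate surrogate (evaluated at the
reference precoders). -/
def aC (σ2 nn qc : ℝ) (H : Fin L → Fin K → Fin L → Matrix (Fin Nu) (Fin NBS) ℂ)
    (Wc : Fin L → Matrix (Fin NBS) (Fin NBS) ℂ)
    (Wp : Fin L → Fin K → Matrix (Fin NBS) (Fin NBS) ℂ)
    (l : Fin L) (k : Fin K) : ℝ :=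
  Real.log ((1 + (Dcmat σ2 H Wc Wp l k)⁻¹ * Scmat H Wc l k).det.re)
    - (((Dcmat σ2 H Wc Wp l k)⁻¹ * Scmat H Wc l k).trace).re
    - qc / (2 * Real.sqrt nn) *
        (Real.sqrt (zetaC σ2 H Wc Wp l k)
          + 2 * (Nu : ℝ) / Real.sqrt (zetaC σ2 H Wc Wp l k))

/-- Linear coefficient `A_{c,lk,ij}` of the common-rate surrogate. -/
def AcIJ (σ2 nn qc : ℝ) (H : Fin L → Fin K → Fin L → Matrix (Fin Nu) (Fin NBS) ℂ)
    (Wc : Fin L → Matrix (Fin NBS) (Fin NBS) ℂ)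
    (Wp : Fin L → Fin K → Matrix (Fin NBS) (Fin NBS) ℂ)
    (l : Fin L) (k : Fin K) (i : Fin L) (j : Fin K) : Matrix (Fin Nu) (Fin NBS) ℂ :=
  ((qc / Real.sqrt (nn * zetaC σ2 H Wc Wp l k) : ℝ) : ℂ) •
    ((Scmat H Wc l k + Dcmat σ2 H Wc Wp l k)⁻¹ * H l k i * Wp i j)

/-- Linear coefficient `A_{c,lk,i}` of the common-rate surrogate. -/
def AcI (σ2 nn qc : ℝ) (H : Fin L → Fin K → Fin L → Matrix (Fin Nu) (Fin NBS) ℂ)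
    (Wc : Fin L → Matrix (Fin NBS) (Fin NBS) ℂ)
    (Wp : Fin L → Fin K → Matrix (Fin NBS) (Fin NBS) ℂ)
    (l : Fin L) (k : Fin K) (i : Fin L) : Matrix (Fin Nu) (Fin NBS) ℂ :=
  if i = l then (Dcmat σ2 H Wc Wp l k)⁻¹ * H l k l * Wc l
  else ((qc / Real.sqrt (nn * zetaC σ2 H Wc Wp l k) : ℝ) : ℂ) •
    ((Scmat H Wc l k + Dcmat σ2 H Wc Wp l k)⁻¹ * H l k i * Wc i)

/-- Quadratic coefficient `B_{c,lk}` of the common-rate surrogate. -/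
def Bc (σ2 nn qc : ℝ) (H : Fin L → Fin K → Fin L → Matrix (Fin Nu) (Fin NBS) ℂ)
    (Wc : Fin L → Matrix (Fin NBS) (Fin NBS) ℂ)
    (Wp : Fin L → Fin K → Matrix (Fin NBS) (Fin NBS) ℂ)
    (l : Fin L) (k : Fin K) : Matrix (Fin Nu) (Fin Nu) ℂ :=
  (Dcmat σ2 H Wc Wp l k)⁻¹ - (Scmat H Wc l k + Dcmat σ2 H Wc Wp l k)⁻¹
    + ((qc / Real.sqrt (nn * zetaC σ2 H Wc Wp l k) : ℝ) : ℂ) •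
        ((Scmat H Wc l k + Dcmat σ2 H Wc Wp l k)⁻¹ * Dcmat σ2 H Wc Wp l k *
          (Scmat H Wc l k + Dcmat σ2 H Wc Wp l k)⁻¹)

/-
Both parts of the rate are minorized by tangent bounds at the reference channels.

For the log-det part write `F = I + GᴴD⁻¹G`, so that `log det (I + D⁻¹GGᴴ) = log det F`.
For every receiver `U` the MSE matrix `E(U)` exceeds `F⁻¹` by `(U - X⁻¹G)ᴴ X (U - X⁻¹G)`, where
`X = GGᴴ + D`. The tangent bound of the concave `log det` at the reference point `F̄⁻¹` then gives
`log det F ≥ log det F̄ - Tr(F̄ E(U)) + dim F`, and at the reference MMSE receiver `Ū = X̄⁻¹Ḡ` the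
right side is linear in `G` and affine in `GGᴴ + D`.

For the dispersion penalty, `√ζ ≤ (ζ̄ + ζ) / (2√ζ̄)` and `ζ = 2 Tr(S X⁻¹) = 2 (N_u - Tr(D X⁻¹))`.
Every Gram term `Tr(Aᴴ X⁻¹ A)` of `Tr(D X⁻¹)` dominates its linearization
`2 Re Tr(Aᴴ X̄⁻¹ Ā) - Tr(Āᴴ X̄⁻¹ X X̄⁻¹ Ā)` (joint convexity of the matrix-fractional function), and
the noise contributes nonnegative traces on both sides.
-/

open scoped MatrixOrder

namespace Matrix

variable {n m : Type*} [Fintype n] [Fintype m]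

lemma PosSemidef.re_trace_nonneg {A : Matrix n n ℂ} (hA : A.PosSemidef) : 0 ≤ A.trace.re :=
  (Complex.nonneg_iff.mp hA.trace_nonneg).1

lemma re_trace_conjTranspose (A : Matrix n n ℂ) : Aᴴ.trace.re = A.trace.re := by
  simp [trace_conjTranspose]

lemma IsHermitian.re_trace_conjTranspose_mul_mul_comm {M : Matrix n n ℂ} (hM : M.IsHermitian)
    (A B : Matrix n m ℂ) : (Aᴴ * M * B).trace.re = (Bᴴ * M * A).trace.re := by
  rw [← re_trace_conjTranspose]
  simp [conjTranspose_mul, hM.eq, Matrix.mul_assoc]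

lemma PosDef.gram_add {D : Matrix n n ℂ} (hD : D.PosDef) (G : Matrix n m ℂ) :
    (G * Gᴴ + D).PosDef :=
  hD.posSemidef_add (posSemidef_self_mul_conjTranspose G)

variable [DecidableEq n]

lemma PosSemidef.re_trace_mul_nonneg {A B : Matrix n n ℂ} (hA : A.PosSemidef)
    (hB : B.PosSemidef) : 0 ≤ (A * B).trace.re := by
  obtain ⟨R, rfl⟩ := CStarAlgebra.nonneg_iff_eq_star_mul_self.mp hB.nonneg
  rw [star_eq_conjTranspose, ← Matrix.mul_assoc, trace_mul_comm, ← Matrix.mul_assoc]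
  exact (hA.mul_mul_conjTranspose_same R).re_trace_nonneg

lemma PosDef.one_add_conjTranspose_mul_inv_mul [DecidableEq m] {D : Matrix n n ℂ}
    (hD : D.PosDef) (G : Matrix n m ℂ) : (1 + Gᴴ * D⁻¹ * G).PosDef :=
  PosDef.one.add_posSemidef (hD.inv.posSemidef.conjTranspose_mul_mul_same G)

lemma PosDef.ofReal_re_det {A : Matrix n n ℂ} (hA : A.PosDef) : (A.det.re : ℂ) = A.det :=
  (Complex.eq_re_of_ofReal_le (r := 0) (by exact_mod_cast hA.det_pos.le)).symm

lemma PosDef.re_det_pos {A : Matrix n n ℂ} (hA : A.PosDef) : 0 < A.det.re :=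
  (Complex.pos_iff.mp hA.det_pos).1

lemma PosDef.re_det_inv {A : Matrix n n ℂ} (hA : A.PosDef) : A⁻¹.det.re = A.det.re⁻¹ := by
  rw [det_nonsing_inv, Ring.inverse_eq_inv', ← hA.ofReal_re_det, ← Complex.ofReal_inv,
    Complex.ofReal_re, Complex.ofReal_re]

lemma PosDef.log_det_re_le_re_trace_sub_card {A : Matrix n n ℂ} (hA : A.PosDef) :
    Real.log A.det.re ≤ A.trace.re - Fintype.card n := by
  have hpos := hA.eigenvalues_pos
  rw [hA.isHermitian.det_eq_prod_eigenvalues, hA.isHermitian.trace_eq_sum_eigenvalues]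
  simp only [RCLike.ofReal, Complex.coe_algebraMap, ← Complex.ofReal_prod, ← Complex.ofReal_sum,
    Complex.ofReal_re]
  rw [Real.log_prod fun i _ => (hpos i).ne']
  calc ∑ i, Real.log (hA.isHermitian.eigenvalues i)
      ≤ ∑ i, (hA.isHermitian.eigenvalues i - 1) :=
        Finset.sum_le_sum fun i _ => Real.log_le_sub_one_of_pos (hpos i)
    _ = _ := by simp [Finset.sum_sub_distrib]

lemma PosDef.log_det_re_le {A B : Matrix n n ℂ} (hA : A.PosDef) (hB : B.PosDef) :
    Real.log A.det.re ≤ Real.log B.det.re + (B⁻¹ * A).trace.re - Fintype.card n := by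
  obtain ⟨R, hBR⟩ := CStarAlgebra.nonneg_iff_eq_star_mul_self.mp hB.posSemidef.nonneg
  rw [star_eq_conjTranspose] at hBR
  have hR : IsUnit R.det := by
    refine isUnit_of_mul_isUnit_right (x := Rᴴ.det) ?_
    rw [← det_mul, ← hBR, ← isUnit_iff_isUnit_det]
    exact hB.isUnit
  obtain ⟨M, hMdef⟩ : ∃ M, M = R⁻¹ᴴ * A * R⁻¹ := ⟨_, rfl⟩
  have hM : M.PosDef := hMdef ▸ hA.conjTranspose_mul_mul_same
    (mulVec_injective_iff_isUnit.mpr ((isUnit_nonsing_inv_iff).mpr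
      ((isUnit_iff_isUnit_det R).mpr hR)))
  have hAM : A = Rᴴ * M * R := by
    calc A = (R⁻¹ * R)ᴴ * A * (R⁻¹ * R) := by simp [nonsing_inv_mul _ hR]
      _ = Rᴴ * M * R := by simp only [hMdef, conjTranspose_mul, Matrix.mul_assoc]
  have hdet : A.det = M.det * B.det := by
    rw [hAM, hBR, det_mul, det_mul, det_mul]; ring
  have htr : (B⁻¹ * A).trace = M.trace := by
    rw [hBR, mul_inv_rev, ← conjTranspose_nonsing_inv, hMdef, Matrix.mul_assoc,
      trace_mul_comm, Matrix.mul_assoc]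
  rw [← hA.ofReal_re_det, ← hM.ofReal_re_det, ← hB.ofReal_re_det, ← Complex.ofReal_mul,
    Complex.ofReal_inj] at hdet
  rw [hdet, Real.log_mul hM.re_det_pos.ne' hB.re_det_pos.ne', htr]
  linarith [hM.log_det_re_le_re_trace_sub_card]

lemma PosDef.log_det_re_ge_of_inv_le {F W E : Matrix n n ℂ} (hF : F.PosDef) (hW : W.PosDef)
    (hE : F⁻¹ ≤ E) :
    Real.log W.det.re - (W * E).trace.re + Fintype.card n ≤ Real.log F.det.re := by
  have h := hF.inv.log_det_re_le hW.inv
  rw [hF.re_det_inv, hW.re_det_inv, Real.log_inv, Real.log_inv,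
    nonsing_inv_nonsing_inv _ ((isUnit_iff_isUnit_det W).mp hW.isUnit)] at h
  have hWE := hW.posSemidef.re_trace_mul_nonneg (le_iff.mp hE)
  rw [Matrix.mul_sub, trace_sub, Complex.sub_re] at hWE
  linarith

lemma PosDef.re_trace_conjTranspose_mul_inv_mul_ge {X Y : Matrix n n ℂ} (hX : X.PosDef)
    (hY : Y.IsHermitian) (A A₀ : Matrix n m ℂ) :
    2 * (Aᴴ * Y * A₀).trace.re - (A₀ᴴ * Y * X * Y * A₀).trace.re ≤ (Aᴴ * X⁻¹ * A).trace.re := by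
  have hXu : IsUnit X.det := (isUnit_iff_isUnit_det X).mp hX.isUnit
  have hsq := hX.inv.posSemidef.conjTranspose_mul_mul_same (A - X * Y * A₀)
  have hexp : (A - X * Y * A₀)ᴴ * X⁻¹ * (A - X * Y * A₀) =
      Aᴴ * X⁻¹ * A - Aᴴ * Y * A₀ - A₀ᴴ * Y * A + A₀ᴴ * Y * X * Y * A₀ := by
    simp only [conjTranspose_sub, conjTranspose_mul, hX.isHermitian.eq, hY.eq, Matrix.sub_mul,
      Matrix.mul_sub, Matrix.mul_assoc, nonsing_inv_mul_cancel_left _ _ hXu,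
      mul_nonsing_inv_cancel_left _ _ hXu]
    abel
  have h := hsq.re_trace_nonneg
  rw [hexp] at h
  simp only [trace_sub, trace_add, Complex.sub_re, Complex.add_re] at h
  rw [hY.re_trace_conjTranspose_mul_mul_comm A₀ A] at h
  linarith

lemma PosDef.re_trace_gram_sum_mul_inv_ge {ι : Type*} {X Y N N₀ : Matrix n n ℂ} (hX : X.PosDef)
    (hY : Y.IsHermitian) (hN : N.PosSemidef) (hN₀ : N₀.PosSemidef) (s : Finset ι)
    (A A₀ : ι → Matrix n m ℂ) :
    2 * ∑ a ∈ s, ((A a)ᴴ * Y * A₀ a).trace.re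
        - (Y * (N₀ + ∑ a ∈ s, A₀ a * (A₀ a)ᴴ) * Y * X).trace.re
      ≤ ((N + ∑ a ∈ s, A a * (A a)ᴴ) * X⁻¹).trace.re := by
  have hNX : 0 ≤ (N * X⁻¹).trace.re := hN.re_trace_mul_nonneg hX.inv.posSemidef
  have hYNY : 0 ≤ (Y * N₀ * Y * X).trace.re := by
    have := (hN₀.mul_mul_conjTranspose_same Y).re_trace_mul_nonneg hX.posSemidef
    rwa [hY.eq] at this
  have hsum := Finset.sum_le_sum fun a (_ : a ∈ s) =>
    hX.re_trace_conjTranspose_mul_inv_mul_ge hY (A a) (A₀ a)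
  have hgram : ∀ a, (A a * (A a)ᴴ * X⁻¹).trace = ((A a)ᴴ * X⁻¹ * A a).trace := fun a => by
    rw [Matrix.mul_assoc, trace_mul_comm]
  have hgram₀ : ∀ a, (Y * (A₀ a * (A₀ a)ᴴ) * Y * X).trace
      = ((A₀ a)ᴴ * Y * X * Y * A₀ a).trace := fun a => by
    simp only [Matrix.mul_assoc]
    rw [← Matrix.mul_assoc, trace_mul_comm]
    simp only [Matrix.mul_assoc]
  simp only [Matrix.add_mul, Matrix.mul_add, Finset.sum_mul, Finset.mul_sum, trace_add,
    trace_sum, Complex.add_re, Complex.re_sum, hgram, hgram₀, Finset.sum_sub_distrib] at hsum ⊢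
  linarith

end Matrix

section MMSE

variable {n m : Type*} [Fintype n] [Fintype m] [DecidableEq m]

def mseMatrix (G : Matrix n m ℂ) (D : Matrix n n ℂ) (U : Matrix n m ℂ) : Matrix m m ℂ :=
  (1 - Uᴴ * G) * (1 - Uᴴ * G)ᴴ + Uᴴ * D * U

lemma mseMatrix_eq (G : Matrix n m ℂ) (D : Matrix n n ℂ) (U : Matrix n m ℂ) :
    mseMatrix G D U = 1 - Uᴴ * G - Gᴴ * U + Uᴴ * (G * Gᴴ + D) * U := by
  simp only [mseMatrix, conjTranspose_sub, conjTranspose_one, conjTranspose_mul,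
    conjTranspose_conjTranspose, Matrix.sub_mul, Matrix.mul_sub, Matrix.mul_add, Matrix.add_mul,
    Matrix.one_mul, Matrix.mul_one, Matrix.mul_assoc]
  abel

variable [DecidableEq n]

lemma det_one_add_inv_mul_gram (D : Matrix n n ℂ) (G : Matrix n m ℂ) :
    (1 + D⁻¹ * (G * Gᴴ)).det = (1 + Gᴴ * D⁻¹ * G).det := by
  rw [← Matrix.mul_assoc, det_one_add_mul_comm, Matrix.mul_assoc]

lemma gram_add_inv_mul {D : Matrix n n ℂ} (hD : D.PosDef) (G : Matrix n m ℂ) :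
    (G * Gᴴ + D)⁻¹ * G = D⁻¹ * G * (1 + Gᴴ * D⁻¹ * G)⁻¹ := by
  have hX := (isUnit_iff_isUnit_det _).mp (hD.gram_add G).isUnit
  have hF := (isUnit_iff_isUnit_det _).mp (hD.one_add_conjTranspose_mul_inv_mul G).isUnit
  have hDu := (isUnit_iff_isUnit_det _).mp hD.isUnit
  have hpush : (G * Gᴴ + D) * (D⁻¹ * G) = G * (1 + Gᴴ * D⁻¹ * G) := by
    simp only [Matrix.add_mul, Matrix.mul_add, Matrix.mul_one, Matrix.mul_assoc,
      mul_nonsing_inv_cancel_left _ _ hDu]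
    abel
  calc (G * Gᴴ + D)⁻¹ * G
      = (G * Gᴴ + D)⁻¹ * (G * (1 + Gᴴ * D⁻¹ * G)) * (1 + Gᴴ * D⁻¹ * G)⁻¹ := by
        rw [Matrix.mul_assoc, Matrix.mul_assoc, mul_nonsing_inv _ hF, Matrix.mul_one]
    _ = D⁻¹ * G * (1 + Gᴴ * D⁻¹ * G)⁻¹ := by
        rw [← hpush, nonsing_inv_mul_cancel_left _ _ hX]

lemma gram_add_inv_mul_mul_one_add {D : Matrix n n ℂ} (hD : D.PosDef) (G : Matrix n m ℂ) :
    (G * Gᴴ + D)⁻¹ * G * (1 + Gᴴ * D⁻¹ * G) = D⁻¹ * G := by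
  rw [gram_add_inv_mul hD, nonsing_inv_mul_cancel_right _ _
    ((isUnit_iff_isUnit_det _).mp (hD.one_add_conjTranspose_mul_inv_mul G).isUnit)]

lemma gram_add_inv_mul_mul_one_add_mul_conjTranspose {D : Matrix n n ℂ} (hD : D.PosDef)
    (G : Matrix n m ℂ) :
    (G * Gᴴ + D)⁻¹ * G * (1 + Gᴴ * D⁻¹ * G) * ((G * Gᴴ + D)⁻¹ * G)ᴴ = D⁻¹ - (G * Gᴴ + D)⁻¹ := by
  have hX := hD.gram_add G
  calc (G * Gᴴ + D)⁻¹ * G * (1 + Gᴴ * D⁻¹ * G) * ((G * Gᴴ + D)⁻¹ * G)ᴴ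
      = D⁻¹ * ((G * Gᴴ + D) - D) * (G * Gᴴ + D)⁻¹ := by
        rw [gram_add_inv_mul_mul_one_add hD, conjTranspose_mul, hX.isHermitian.inv.eq,
          add_sub_cancel_right]
        simp only [Matrix.mul_assoc]
    _ = D⁻¹ - (G * Gᴴ + D)⁻¹ := by
        rw [Matrix.mul_sub, Matrix.sub_mul,
          mul_nonsing_inv_cancel_right _ _ ((isUnit_iff_isUnit_det _).mp hX.isUnit),
          nonsing_inv_mul _ ((isUnit_iff_isUnit_det _).mp hD.isUnit), Matrix.one_mul]

lemma conjTranspose_mul_gram_add_inv_mul {D : Matrix n n ℂ} (hD : D.PosDef)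
    (G : Matrix n m ℂ) :
    Gᴴ * ((G * Gᴴ + D)⁻¹ * G) = 1 - (1 + Gᴴ * D⁻¹ * G)⁻¹ := by
  have hF := (isUnit_iff_isUnit_det _).mp (hD.one_add_conjTranspose_mul_inv_mul G).isUnit
  calc Gᴴ * ((G * Gᴴ + D)⁻¹ * G)
      = ((1 + Gᴴ * D⁻¹ * G) - 1) * (1 + Gᴴ * D⁻¹ * G)⁻¹ := by
        rw [gram_add_inv_mul hD, add_sub_cancel_left]
        simp only [Matrix.mul_assoc]
    _ = 1 - (1 + Gᴴ * D⁻¹ * G)⁻¹ := by rw [Matrix.sub_mul, mul_nonsing_inv _ hF, Matrix.one_mul]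

lemma inv_one_add_le_mseMatrix {D : Matrix n n ℂ} (hD : D.PosDef) (G U : Matrix n m ℂ) :
    (1 + Gᴴ * D⁻¹ * G)⁻¹ ≤ mseMatrix G D U := by
  have hXpd := hD.gram_add G
  have hX := (isUnit_iff_isUnit_det _).mp hXpd.isUnit
  suffices h : mseMatrix G D U - (1 + Gᴴ * D⁻¹ * G)⁻¹ =
      (U - (G * Gᴴ + D)⁻¹ * G)ᴴ * (G * Gᴴ + D) * (U - (G * Gᴴ + D)⁻¹ * G) by
    rw [le_iff, h]; exact hXpd.posSemidef.conjTranspose_mul_mul_same _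
  rw [mseMatrix_eq, ← sub_sub_cancel 1 (1 + Gᴴ * D⁻¹ * G)⁻¹,
    ← conjTranspose_mul_gram_add_inv_mul hD G]
  simp only [conjTranspose_sub, conjTranspose_mul, hXpd.isHermitian.inv.eq, Matrix.sub_mul,
    Matrix.mul_sub, Matrix.mul_assoc, nonsing_inv_mul_cancel_left _ _ hX,
    mul_nonsing_inv_cancel_left _ _ hX]
  abel

lemma re_trace_mul_mseMatrix_mmse {D₀ : Matrix n n ℂ} (hD₀ : D₀.PosDef) (G G₀ : Matrix n m ℂ)
    (D : Matrix n n ℂ) :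
    ((1 + G₀ᴴ * D₀⁻¹ * G₀) * mseMatrix G D ((G₀ * G₀ᴴ + D₀)⁻¹ * G₀)).trace.re
      = Fintype.card m + (D₀⁻¹ * (G₀ * G₀ᴴ)).trace.re - 2 * (Gᴴ * D₀⁻¹ * G₀).trace.re
        + ((D₀⁻¹ - (G₀ * G₀ᴴ + D₀)⁻¹) * (G * Gᴴ + D)).trace.re := by
  have hUF₀ := gram_add_inv_mul_mul_one_add hD₀ G₀
  have hUF₀U := gram_add_inv_mul_mul_one_add_mul_conjTranspose hD₀ G₀
  have hF₀H := (hD₀.one_add_conjTranspose_mul_inv_mul G₀).isHermitian.eq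
  have htrF₀ : (1 + G₀ᴴ * D₀⁻¹ * G₀).trace = Fintype.card m + (D₀⁻¹ * (G₀ * G₀ᴴ)).trace := by
    rw [trace_add, trace_one, Matrix.mul_assoc, trace_mul_comm, Matrix.mul_assoc]
  generalize 1 + G₀ᴴ * D₀⁻¹ * G₀ = F₀ at hUF₀ hUF₀U hF₀H htrF₀ ⊢
  generalize (G₀ * G₀ᴴ + D₀)⁻¹ * G₀ = U at hUF₀ hUF₀U ⊢
  have hF₀U : F₀ * Uᴴ = G₀ᴴ * D₀⁻¹ := by
    have h := congrArg conjTranspose hUF₀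
    rwa [conjTranspose_mul, conjTranspose_mul, hD₀.isHermitian.inv.eq, hF₀H] at h
  have hcross₁ : (F₀ * (Uᴴ * G)).trace = (G₀ᴴ * D₀⁻¹ * G).trace := by
    rw [← Matrix.mul_assoc, hF₀U]
  have hcross₂ : (F₀ * (Gᴴ * U)).trace = (Gᴴ * D₀⁻¹ * G₀).trace := by
    rw [← Matrix.mul_assoc, trace_mul_comm, ← Matrix.mul_assoc, hUF₀, trace_mul_cycle]
  have hquad : (F₀ * (Uᴴ * (G * Gᴴ + D) * U)).trace
      = ((D₀⁻¹ - (G₀ * G₀ᴴ + D₀)⁻¹) * (G * Gᴴ + D)).trace := by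
    rw [← Matrix.mul_assoc, trace_mul_comm, ← hUF₀U]
    simp only [Matrix.mul_assoc]
  rw [mseMatrix_eq, Matrix.mul_add, Matrix.mul_sub, Matrix.mul_sub, Matrix.mul_one, trace_add,
    trace_sub, trace_sub, hcross₁, hcross₂, hquad, htrF₀]
  simp only [Complex.add_re, Complex.sub_re]
  rw [hD₀.isHermitian.inv.re_trace_conjTranspose_mul_mul_comm G₀ G, Complex.natCast_re]
  ring

lemma log_det_one_add_inv_mul_gram_ge {D D₀ : Matrix n n ℂ} (hD : D.PosDef) (hD₀ : D₀.PosDef)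
    (G G₀ : Matrix n m ℂ) :
    Real.log (1 + D₀⁻¹ * (G₀ * G₀ᴴ)).det.re - (D₀⁻¹ * (G₀ * G₀ᴴ)).trace.re
        + 2 * (Gᴴ * D₀⁻¹ * G₀).trace.re - ((D₀⁻¹ - (G₀ * G₀ᴴ + D₀)⁻¹) * (G * Gᴴ + D)).trace.re
      ≤ Real.log (1 + D⁻¹ * (G * Gᴴ)).det.re := by
  have h := (hD.one_add_conjTranspose_mul_inv_mul G).log_det_re_ge_of_inv_le
    (hD₀.one_add_conjTranspose_mul_inv_mul G₀)
    (inv_one_add_le_mseMatrix hD G ((G₀ * G₀ᴴ + D₀)⁻¹ * G₀))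
  rw [re_trace_mul_mseMatrix_mmse hD₀] at h
  rw [det_one_add_inv_mul_gram, det_one_add_inv_mul_gram]
  linarith

end MMSE

section Dispersion

variable {n m : Type*} [Fintype n] [Fintype m] [DecidableEq n]

def dispersion (S D : Matrix n n ℂ) : ℝ := 2 * (S * (S + D)⁻¹).trace.re

lemma dispersion_nonneg {S D : Matrix n n ℂ} (hS : S.PosSemidef) (hSD : (S + D).PosDef) :
    0 ≤ dispersion S D :=
  mul_nonneg zero_le_two (hS.re_trace_mul_nonneg hSD.inv.posSemidef)

lemma dispersion_le {ι : Type*} {S D D₀ N N₀ Y : Matrix n n ℂ} (hSD : (S + D).PosDef)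
    (hY : Y.IsHermitian) (hN : N.PosSemidef) (hN₀ : N₀.PosSemidef) {s : Finset ι}
    {A A₀ : ι → Matrix n m ℂ} (hD : D = N + ∑ a ∈ s, A a * (A a)ᴴ)
    (hD₀ : D₀ = N₀ + ∑ a ∈ s, A₀ a * (A₀ a)ᴴ) :
    dispersion S D ≤ 2 * Fintype.card n - 4 * ∑ a ∈ s, ((A a)ᴴ * Y * A₀ a).trace.re
      + 2 * (Y * D₀ * Y * (S + D)).trace.re := by
  have hsplit : (S * (S + D)⁻¹).trace + (D * (S + D)⁻¹).trace = Fintype.card n := by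
    rw [← trace_add, ← Matrix.add_mul, mul_nonsing_inv _ ((isUnit_iff_isUnit_det _).mp hSD.isUnit),
      trace_one]
  have h := hSD.re_trace_gram_sum_mul_inv_ge hY hN hN₀ s A A₀
  rw [← hD, ← hD₀] at h
  have hre := congrArg Complex.re hsplit
  simp only [Complex.add_re, Complex.natCast_re] at hre
  unfold dispersion
  linarith

end Dispersion

lemma mul_sqrt_div_le {q nn t u z : ℝ} (hq : 0 ≤ q) (hn : 0 < nn) (ht : 0 ≤ t) (htu : t ≤ u)
    (hz : 0 < z) : q * √(t / nn) ≤ q / (2 * √nn) * (√z + u / √z) := by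
  have hsz := Real.sqrt_pos.mpr hz
  have hsn := Real.sqrt_pos.mpr hn
  have hamgm : 2 * √t ≤ √z + u / √z := by
    rw [← sub_nonneg, show √z + u / √z - 2 * √t = ((√z - √t) ^ 2 + (u - t)) / √z by
      field_simp; linear_combination -Real.sq_sqrt ht]
    exact div_nonneg (by nlinarith [sq_nonneg (√z - √t)]) hsz.le
  calc q * √(t / nn) = q / (2 * √nn) * (2 * √t) := by
        rw [Real.sqrt_div ht]; field_simp
    _ ≤ q / (2 * √nn) * (√z + u / √z) := by gcongr

theorem log_det_sub_sqrt_dispersion_ge {n m ι : Type*} [Fintype n] [Fintype m] [DecidableEq n]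
    [DecidableEq m] {N N₀ D D₀ : Matrix n n ℂ} (hN : N.PosDef) (hN₀ : N₀.PosDef) {s : Finset ι}
    {A A₀ : ι → Matrix n m ℂ} (hD : D = N + ∑ a ∈ s, A a * (A a)ᴴ)
    (hD₀ : D₀ = N₀ + ∑ a ∈ s, A₀ a * (A₀ a)ᴴ) {nn q : ℝ} (hn : 0 < nn) (hq : 0 ≤ q)
    (G G₀ : Matrix n m ℂ) (hζ : 0 < dispersion (G₀ * G₀ᴴ) D₀) :
    Real.log (1 + D₀⁻¹ * (G₀ * G₀ᴴ)).det.re - (D₀⁻¹ * (G₀ * G₀ᴴ)).trace.re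
        - q / (2 * √nn) * (√(dispersion (G₀ * G₀ᴴ) D₀)
            + 2 * Fintype.card n / √(dispersion (G₀ * G₀ᴴ) D₀))
        + 2 * (Gᴴ * D₀⁻¹ * G₀).trace.re
        + 2 * (q / √(nn * dispersion (G₀ * G₀ᴴ) D₀)) *
            ∑ a ∈ s, ((A a)ᴴ * (G₀ * G₀ᴴ + D₀)⁻¹ * A₀ a).trace.re
        - ((D₀⁻¹ - (G₀ * G₀ᴴ + D₀)⁻¹ + ((q / √(nn * dispersion (G₀ * G₀ᴴ) D₀) : ℝ) : ℂ) •
            ((G₀ * G₀ᴴ + D₀)⁻¹ * D₀ * (G₀ * G₀ᴴ + D₀)⁻¹)) * (G * Gᴴ + D)).trace.re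
      ≤ Real.log (1 + D⁻¹ * (G * Gᴴ)).det.re - q * √(dispersion (G * Gᴴ) D / nn) := by
  have hgram {B : ι → Matrix n m ℂ} : (∑ a ∈ s, B a * (B a)ᴴ).PosSemidef :=
    posSemidef_sum s fun a _ => posSemidef_self_mul_conjTranspose (B a)
  have hDpd : D.PosDef := hD ▸ hN.add_posSemidef hgram
  have hD₀pd : D₀.PosDef := hD₀ ▸ hN₀.add_posSemidef hgram
  have hlog := log_det_one_add_inv_mul_gram_ge hDpd hD₀pd G G₀
  have hζle := dispersion_le (hDpd.gram_add G) (hD₀pd.gram_add G₀).isHermitian.inv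
    hN.posSemidef hN₀.posSemidef hD hD₀
  have hsqrt := mul_sqrt_div_le hq hn
    (dispersion_nonneg (posSemidef_self_mul_conjTranspose G) (hDpd.gram_add G)) hζle hζ
  set ζ₀ := dispersion (G₀ * G₀ᴴ) D₀
  have hc : q / √(nn * ζ₀) = q / (2 * √nn) * (2 / √ζ₀) := by
    rw [Real.sqrt_mul hn.le]; field_simp
  rw [Matrix.add_mul, trace_add, Complex.add_re, smul_mul, trace_smul, smul_eq_mul,
    Complex.re_ofReal_mul, hc]
  have hsplit : ∀ L Q : ℝ, q / (2 * √nn) * (√ζ₀ + (2 * Fintype.card n - 4 * L + 2 * Q) / √ζ₀)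
      = q / (2 * √nn) * (√ζ₀ + 2 * Fintype.card n / √ζ₀) - 2 * (q / (2 * √nn) * (2 / √ζ₀)) * L
        + q / (2 * √nn) * (2 / √ζ₀) * Q := fun L Q => by ring
  rw [hsplit] at hsqrt
  linarith

/-- When user `(l, k)` decodes the common message of cell `l`, every private stream `(i, j)`
(its own included) and the common stream of every other cell `i ≠ l` is interference. -/
def interferingStreams (H : Fin L → Fin K → Fin L → Matrix (Fin Nu) (Fin NBS) ℂ)
    (Wc : Fin L → Matrix (Fin NBS) (Fin NBS) ℂ)
    (Wp : Fin L → Fin K → Matrix (Fin NBS) (Fin NBS) ℂ) (l : Fin L) (k : Fin K) :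
    (Fin L × Fin K) ⊕ Fin L → Matrix (Fin Nu) (Fin NBS) ℂ :=
  Sum.elim (fun p => H l k p.1 * Wp p.1 p.2) (fun i => H l k i * Wc i)

def interferingIndices (l : Fin L) : Finset ((Fin L × Fin K) ⊕ Fin L) :=
  univ.disjSum (univ.erase l)

lemma Dcmat_eq_gram (σ2 : ℝ) (H : Fin L → Fin K → Fin L → Matrix (Fin Nu) (Fin NBS) ℂ)
    (Wc : Fin L → Matrix (Fin NBS) (Fin NBS) ℂ)
    (Wp : Fin L → Fin K → Matrix (Fin NBS) (Fin NBS) ℂ) (l : Fin L) (k : Fin K) :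
    Dcmat σ2 H Wc Wp l k = (σ2 : ℂ) • (1 : Matrix (Fin Nu) (Fin Nu) ℂ)
      + ∑ a ∈ interferingIndices l,
          interferingStreams H Wc Wp l k a * (interferingStreams H Wc Wp l k a)ᴴ := by
  have hC : ∀ i, H l k i * Cmat Wc Wp i * (H l k i)ᴴ = (H l k i * Wc i) * (H l k i * Wc i)ᴴ
      + ∑ j, (H l k i * Wp i j) * (H l k i * Wp i j)ᴴ := fun i => by
    simp only [Cmat, Matrix.mul_add, Matrix.add_mul, Matrix.mul_sum, Matrix.sum_mul,
      conjTranspose_mul, Matrix.mul_assoc]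
  rw [Dcmat, Dmat, Smat, interferingIndices, sum_disjSum, Fintype.sum_prod_type]
  simp only [interferingStreams, Sum.elim_inl, Sum.elim_inr, hC, sum_add_distrib]
  rw [← add_sum_erase univ _ (mem_univ l), ← add_sum_erase univ _ (mem_univ k)]
  abel

lemma trace_mul_mul_mul_conjTranspose_mul_conjTranspose {n p q : Type*} [Fintype n] [Fintype p]
    [Fintype q] (M : Matrix n n ℂ) (P Q : Matrix n p ℂ) (W : Matrix p q ℂ) :
    (M * P * W * Wᴴ * Qᴴ).trace = ((Q * W)ᴴ * M * (P * W)).trace := by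
  rw [Matrix.mul_assoc (M * P * W), trace_mul_comm, conjTranspose_mul]
  simp only [Matrix.mul_assoc]

lemma sum_re_trace_AcIJ_add_sum_re_trace_AcI (σ2 nn qc : ℝ)
    (Hb H : Fin L → Fin K → Fin L → Matrix (Fin Nu) (Fin NBS) ℂ)
    (Wc : Fin L → Matrix (Fin NBS) (Fin NBS) ℂ)
    (Wp : Fin L → Fin K → Matrix (Fin NBS) (Fin NBS) ℂ) (l : Fin L) (k : Fin K) :
    ∑ i, ∑ j, ((AcIJ σ2 nn qc Hb Wc Wp l k i j * (Wp i j)ᴴ * (H l k i)ᴴ).trace).re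
        + ∑ i, ((AcI σ2 nn qc Hb Wc Wp l k i * (Wc i)ᴴ * (H l k i)ᴴ).trace).re
      = ((H l k l * Wc l)ᴴ * (Dcmat σ2 Hb Wc Wp l k)⁻¹ * (Hb l k l * Wc l)).trace.re
        + qc / √(nn * zetaC σ2 Hb Wc Wp l k) * ∑ a ∈ interferingIndices l,
            ((interferingStreams H Wc Wp l k a)ᴴ
              * (Scmat Hb Wc l k + Dcmat σ2 Hb Wc Wp l k)⁻¹
              * interferingStreams Hb Wc Wp l k a).trace.re := by
  have hprivate : ∑ i, ∑ j, ((AcIJ σ2 nn qc Hb Wc Wp l k i j * (Wp i j)ᴴ * (H l k i)ᴴ).trace).re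
      = qc / √(nn * zetaC σ2 Hb Wc Wp l k) * ∑ i, ∑ j, ((H l k i * Wp i j)ᴴ
          * (Scmat Hb Wc l k + Dcmat σ2 Hb Wc Wp l k)⁻¹ * (Hb l k i * Wp i j)).trace.re := by
    simp only [AcIJ, Finset.mul_sum, smul_mul, trace_smul, smul_eq_mul, Complex.re_ofReal_mul,
      trace_mul_mul_mul_conjTranspose_mul_conjTranspose]
  have hcommon : ∑ i, ((AcI σ2 nn qc Hb Wc Wp l k i * (Wc i)ᴴ * (H l k i)ᴴ).trace).re
      = ((H l k l * Wc l)ᴴ * (Dcmat σ2 Hb Wc Wp l k)⁻¹ * (Hb l k l * Wc l)).trace.re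
        + qc / √(nn * zetaC σ2 Hb Wc Wp l k) * ∑ i ∈ univ.erase l, ((H l k i * Wc i)ᴴ
          * (Scmat Hb Wc l k + Dcmat σ2 Hb Wc Wp l k)⁻¹ * (Hb l k i * Wc i)).trace.re := by
    rw [← add_sum_erase _ _ (mem_univ l), Finset.mul_sum]
    congr 1
    · rw [AcI, if_pos rfl, trace_mul_mul_mul_conjTranspose_mul_conjTranspose]
    · refine sum_congr rfl fun i hi => ?_
      simp only [AcI, if_neg (ne_of_mem_erase hi), smul_mul, trace_smul, smul_eq_mul,
        Complex.re_ofReal_mul, trace_mul_mul_mul_conjTranspose_mul_conjTranspose]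
  rw [hprivate, hcommon, interferingIndices, sum_disjSum, Fintype.sum_prod_type]
  simp only [interferingStreams, Sum.elim_inl, Sum.elim_inr]
  ring

theorem common_rate_surrogate_channels_general {L K Nu NBS : ℕ}
    (σ2 nn qc : ℝ) (hσ : 0 < σ2) (hn : 0 < nn) (hqc : 0 ≤ qc)
    (Hb : Fin L → Fin K → Fin L → Matrix (Fin Nu) (Fin NBS) ℂ)
    (Wcb : Fin L → Matrix (Fin NBS) (Fin NBS) ℂ)
    (Wpb : Fin L → Fin K → Matrix (Fin NBS) (Fin NBS) ℂ)
    (l : Fin L) (k : Fin K)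
    (hζ : 0 < zetaC σ2 Hb Wcb Wpb l k)
    (H : Fin L → Fin K → Fin L → Matrix (Fin Nu) (Fin NBS) ℂ) :
    rcRate σ2 nn qc H Wcb Wpb l k ≥
      aC σ2 nn qc Hb Wcb Wpb l k
        + 2 * ∑ i : Fin L, ∑ j : Fin K,
            ((AcIJ σ2 nn qc Hb Wcb Wpb l k i j * (Wpb i j)ᴴ * (H l k i)ᴴ).trace).re
        + 2 * ∑ i : Fin L,
            ((AcI σ2 nn qc Hb Wcb Wpb l k i * (Wcb i)ᴴ * (H l k i)ᴴ).trace).re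
        - ((Bc σ2 nn qc Hb Wcb Wpb l k *
            (Scmat H Wcb l k + Dcmat σ2 H Wcb Wpb l k)).trace).re := by
  have hnoise : ((σ2 : ℂ) • (1 : Matrix (Fin Nu) (Fin Nu) ℂ)).PosDef :=
    PosDef.one.smul (by exact_mod_cast hσ)
  have key := log_det_sub_sqrt_dispersion_ge hnoise hnoise (Dcmat_eq_gram σ2 H Wcb Wpb l k)
    (Dcmat_eq_gram σ2 Hb Wcb Wpb l k) hn hqc (H l k l * Wcb l) (Hb l k l * Wcb l) hζ
  have hlin := sum_re_trace_AcIJ_add_sum_re_trace_AcI σ2 nn qc Hb H Wcb Wpb l k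
  simp only [rcRate, aC, Bc, zetaC, Scmat, dispersion, Fintype.card_fin] at key hlin ⊢
  linarith

/-- **Corollary 1, inequality (32) of the paper.** With the precoders fixed to the
reference precoders `{W̄} = (Wcb, Wpb)` and reference channels `{H̄} = Hb`, assuming
`σ² > 0`, `n > 0`, `q_c ≥ 0`, `N_u ≤ N_BS` and `ζ̄_{c,lk} > 0` (barred quantities
evaluated at `(Hb, W̄)`), for every choice of channel matrices `H` (in particular
those induced by any feasible RIS coefficients), with the rate, `S_{c,lk}` and
`D_{c,lk}` evaluated at `(H, W̄)`:
`r_{c,lk} ≥ a_{c,lk} + 2 Σ_{ij} Re Tr(A_{c,lk,ij} W̄_{ij}ᴴ H_{lk,i}ᴴ)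
  + 2 Σ_{i} Re Tr(A_{c,lk,i} W̄_{i}ᴴ H_{lk,i}ᴴ)
  − Re Tr(B_{c,lk} (H_{lk,l}W̄_{l}W̄_{l}ᴴH_{lk,l}ᴴ + D_{c,lk}))`. -/
theorem common_rate_surrogate_channels {L K Nu NBS : ℕ}
    (σ2 nn qc : ℝ) (hσ : 0 < σ2) (hn : 0 < nn) (hqc : 0 ≤ qc) (hNu : Nu ≤ NBS)
    (Hb : Fin L → Fin K → Fin L → Matrix (Fin Nu) (Fin NBS) ℂ)
    (Wcb : Fin L → Matrix (Fin NBS) (Fin NBS) ℂ)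
    (Wpb : Fin L → Fin K → Matrix (Fin NBS) (Fin NBS) ℂ)
    (l : Fin L) (k : Fin K)
    (hζ : 0 < zetaC σ2 Hb Wcb Wpb l k)
    (H : Fin L → Fin K → Fin L → Matrix (Fin Nu) (Fin NBS) ℂ) :
    rcRate σ2 nn qc H Wcb Wpb l k ≥
      aC σ2 nn qc Hb Wcb Wpb l k
        + 2 * ∑ i : Fin L, ∑ j : Fin K,
            ((AcIJ σ2 nn qc Hb Wcb Wpb l k i j * (Wpb i j)ᴴ * (H l k i)ᴴ).trace).re
        + 2 * ∑ i : Fin L,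
            ((AcI σ2 nn qc Hb Wcb Wpb l k i * (Wcb i)ᴴ * (H l k i)ᴴ).trace).re
        - ((Bc σ2 nn qc Hb Wcb Wpb l k *
            (Scmat H Wcb l k + Dcmat σ2 H Wcb Wpb l k)).trace).re :=
  common_rate_surrogate_channels_general σ2 nn qc hσ hn hqc Hb Wcb Wpb l k hζ H

end RSMA
end

section
/- (Equation (41) of the paper: concave lower bound on the channel-dispersion penalty of the common message.) Fix the channels H_{lk,i} (so H̄_{lk,i} = H_{lk,i}) and fix reference precoders {W̄} = {W̄_i, W̄_{ij}}. Assume σ² > 0, n > 0, q_c ≥ 0 and, for the pair (l,k) considered, ζ̄_{c,lk} := 2 Tr(S̄_{c,lk}(S̄_{c,lk} + D̄_{c,lk})^{-1}) > 0. Then for every choice of precoders {W} = {W_i, W_{ij}}, writing ζ_{c,lk} := 2 Tr(S_{c,lk}(S_{c,lk} + D_{c,lk})^{-1}) (a nonnegative real number): −q_c·√(ζ_{c,lk}/n) ≥ −q_c·√(ζ̄_{c,lk}/(4n)) − q_c·N_u/√(n·ζ̄_{c,lk}) + (2q_c/√(n·ζ̄_{c,lk}))·Σ_{i=1}^{L}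 Σ_{j=1}^{K} Re Tr((S̄_{c,lk} + D̄_{c,lk})^{-1} H_{lk,i} W̄_{ij} W_{ij}^H H_{lk,i}^H) + (2q_c/√(n·ζ̄_{c,lk}))·Σ_{i ≠ l} Re Tr((S̄_{c,lk} + D̄_{c,lk})^{-1} H_{lk,i} W̄_{i} W_{i}^H H_{lk,i}^H) − (q_c/√(n·ζ̄_{c,lk}))·Re Tr((S̄_{c,lk} + D̄_{c,lk})^{-1} D̄_{c,lk} (S̄_{c,lk} + D̄_{c,lk})^{-1} (S_{c,lk} + D_{c,lk})), where barred quantities are evaluated at {W̄} and unbarred quantities at {W}, and N_u = Tr(I) is the dimension of the receive space. -/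
open Matrix Finset
open scoped ComplexOrder

noncomputable section RSMA

variable {L K Nu NBS : ℕ}

/-! With `T = S_c + D_c`, the dispersion is `ζ = 2 (N_u - Re Tr(D_c T⁻¹))`. Split `D_c` into
Gram terms `U Uᴴ` (the noise, every private stream, the common streams of the other cells); each
`Re Tr(U Uᴴ T⁻¹)` dominates its tangent plane at the reference point `(Ū, T̄)`, because
`0 ≤ Re Tr(Vᴴ T⁻¹ V)` for `V = U - T T̄⁻¹ Ū`. This bounds `ζ` above by an expression affine in `T`
and in the cross terms `Ū Uᴴ`, and the tangent line of `√` at `ζ̄`,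
`√ζ ≤ √ζ̄ / 2 + ζ / (2 √ζ̄)`, turns it into the lower bound on `-q_c √(ζ / n)`. -/

namespace Matrix

variable {n m : Type*} [Fintype n] [Fintype m]

lemma PosSemidef.re_trace_nonneg_s9 {M : Matrix n n ℂ} (hM : M.PosSemidef) : 0 ≤ M.trace.re :=
  (Complex.nonneg_iff.mp hM.trace_nonneg).1

lemma PosSemidef.re_trace_mul_conjTranspose_mul_nonneg {X : Matrix n n ℂ} (hX : X.PosSemidef)
    (U : Matrix n m ℂ) : 0 ≤ (U * Uᴴ * X).trace.re := by
  rw [Matrix.mul_assoc, trace_mul_comm]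
  exact (hX.conjTranspose_mul_mul_same U).re_trace_nonneg_s9

variable [DecidableEq n]

lemma PosDef.two_mul_re_trace_sub_le {T : Matrix n n ℂ} (hT : T.PosDef) (X U : Matrix n m ℂ) :
    2 * (X * Uᴴ).trace.re - (X * Xᴴ * T).trace.re ≤ (U * Uᴴ * T⁻¹).trace.re := by
  have hdet : IsUnit T.det := isUnit_iff_ne_zero.mpr hT.det_pos.ne'
  have hsq := (hT.inv.posSemidef.conjTranspose_mul_mul_same (U - T * X)).re_trace_nonneg_s9
  have hexp : (U - T * X)ᴴ * T⁻¹ * (U - T * X)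
      = Uᴴ * T⁻¹ * U - Uᴴ * X - Xᴴ * U + Xᴴ * T * X := by
    simp only [conjTranspose_sub, conjTranspose_mul, hT.isHermitian.eq, Matrix.sub_mul,
      Matrix.mul_sub, Matrix.mul_assoc, nonsing_inv_mul_cancel_left _ _ hdet,
      mul_nonsing_inv_cancel_left _ _ hdet]
    abel
  have hcross : (Xᴴ * U).trace.re = (X * Uᴴ).trace.re := by
    rw [← conjTranspose_conjTranspose X, ← conjTranspose_mul, trace_conjTranspose,
      conjTranspose_conjTranspose, Complex.star_def, Complex.conj_re, trace_mul_comm]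
  rw [hexp, trace_add, trace_sub, trace_sub, Complex.add_re, Complex.sub_re, Complex.sub_re,
    trace_mul_cycle, trace_mul_comm Uᴴ, hcross, trace_mul_cycle Xᴴ] at hsq
  linarith

/-- `(P, Q, R)` stands for `(Ub * Uᴴ, Ub * Ubᴴ, U * Uᴴ)`: the left side is then the linearization
at `(Ub, Tb)` of the jointly convex map `(U, T) ↦ Re Tr(U Uᴴ T⁻¹)`, evaluated at `(U, T)`. -/
def TangentLowerBound (T Tb P Q R : Matrix n n ℂ) : Prop :=
  2 * (Tb⁻¹ * P).trace.re - (Tb⁻¹ * Q * Tb⁻¹ * T).trace.re ≤ (R * T⁻¹).trace.re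

namespace TangentLowerBound

variable {T Tb : Matrix n n ℂ}

lemma of_mul_conjTranspose (hT : T.PosDef) (hTb : Tb.IsHermitian) (Ub U : Matrix n m ℂ) :
    TangentLowerBound T Tb (Ub * Uᴴ) (Ub * Ubᴴ) (U * Uᴴ) := by
  have h := hT.two_mul_re_trace_sub_le (Tb⁻¹ * Ub) U
  rw [conjTranspose_mul, hTb.inv.eq] at h
  unfold TangentLowerBound
  simpa only [Matrix.mul_assoc] using h

lemma add {P₁ Q₁ R₁ P₂ Q₂ R₂ : Matrix n n ℂ} (h₁ : TangentLowerBound T Tb P₁ Q₁ R₁)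
    (h₂ : TangentLowerBound T Tb P₂ Q₂ R₂) :
    TangentLowerBound T Tb (P₁ + P₂) (Q₁ + Q₂) (R₁ + R₂) := by
  unfold TangentLowerBound at *
  simp only [Matrix.mul_add, Matrix.add_mul, trace_add, Complex.add_re]
  linarith

lemma smul {P Q R : Matrix n n ℂ} {c : ℝ} (hc : 0 ≤ c) (h : TangentLowerBound T Tb P Q R) :
    TangentLowerBound T Tb ((c : ℂ) • P) ((c : ℂ) • Q) ((c : ℂ) • R) := by
  unfold TangentLowerBound at *
  simp only [Matrix.mul_smul, Matrix.smul_mul, trace_smul, smul_eq_mul, Complex.re_ofReal_mul]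
  linarith [mul_le_mul_of_nonneg_left h hc]

lemma sum {ι : Type*} (s : Finset ι) {P Q R : ι → Matrix n n ℂ}
    (h : ∀ i ∈ s, TangentLowerBound T Tb (P i) (Q i) (R i)) :
    TangentLowerBound T Tb (∑ i ∈ s, P i) (∑ i ∈ s, Q i) (∑ i ∈ s, R i) := by
  unfold TangentLowerBound at *
  simp only [Matrix.sum_mul, trace_sum, Complex.re_sum, Finset.mul_sum,
    ← Finset.sum_sub_distrib]
  exact Finset.sum_le_sum h

end TangentLowerBound

end Matrix

/-- `Dcmat` regrouped as the private streams of all cells plus the common streams of the other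
cells, with the left and right factors of each stream taken from two precoder choices. -/
def crossDcmat (σ2 : ℝ) (H : Fin L → Fin K → Fin L → Matrix (Fin Nu) (Fin NBS) ℂ)
    (Wc' : Fin L → Matrix (Fin NBS) (Fin NBS) ℂ)
    (Wp' : Fin L → Fin K → Matrix (Fin NBS) (Fin NBS) ℂ)
    (Wc : Fin L → Matrix (Fin NBS) (Fin NBS) ℂ)
    (Wp : Fin L → Fin K → Matrix (Fin NBS) (Fin NBS) ℂ)
    (l : Fin L) (k : Fin K) : Matrix (Fin Nu) (Fin Nu) ℂ :=
  (σ2 : ℂ) • 1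
    + ((∑ i : Fin L, ∑ j : Fin K, (H l k i * Wp' i j) * (H l k i * Wp i j)ᴴ)
      + ∑ i ∈ Finset.univ.erase l, (H l k i * Wc' i) * (H l k i * Wc i)ᴴ)

section Covariances

variable (σ2 : ℝ) (H : Fin L → Fin K → Fin L → Matrix (Fin Nu) (Fin NBS) ℂ)
  (Wc : Fin L → Matrix (Fin NBS) (Fin NBS) ℂ) (Wp : Fin L → Fin K → Matrix (Fin NBS) (Fin NBS) ℂ)
  (l : Fin L) (k : Fin K)

lemma Dcmat_eq_crossDcmat : Dcmat σ2 H Wc Wp l k = crossDcmat σ2 H Wc Wp Wc Wp l k := by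
  have hC : ∑ i ∈ Finset.univ.erase l, H l k i * Cmat Wc Wp i * (H l k i)ᴴ
      = ∑ i ∈ Finset.univ.erase l, ((H l k i * Wc i) * (H l k i * Wc i)ᴴ
        + ∑ j : Fin K, (H l k i * Wp i j) * (H l k i * Wp i j)ᴴ) := by
    refine Finset.sum_congr rfl fun i _ => ?_
    simp only [Cmat, Matrix.mul_add, Matrix.add_mul, Matrix.mul_sum, Matrix.sum_mul,
      conjTranspose_mul, Matrix.mul_assoc]
  rw [Dcmat, Dmat, Smat, crossDcmat, hC, Finset.sum_add_distrib,
    ← Finset.sum_erase_add _ _ (Finset.mem_univ l),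
    ← Finset.sum_erase_add _ _ (Finset.mem_univ k)]
  abel

variable {σ2}

lemma posDef_Scmat_add_Dcmat (hσ : 0 < σ2) :
    (Scmat H Wc l k + Dcmat σ2 H Wc Wp l k).PosDef := by
  have hnoise : ((σ2 : ℂ) • (1 : Matrix (Fin Nu) (Fin Nu) ℂ)).PosDef := by
    rw [smul_one_eq_diagonal]
    exact PosDef.diagonal fun _ => Complex.zero_lt_real.mpr hσ
  rw [Dcmat_eq_crossDcmat, crossDcmat]
  refine PosDef.posSemidef_add (posSemidef_self_mul_conjTranspose (H l k l * Wc l))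
    (hnoise.add_posSemidef (PosSemidef.add ?_ ?_))
  · exact posSemidef_sum _ fun i _ => posSemidef_sum _ fun j _ =>
      posSemidef_self_mul_conjTranspose (H l k i * Wp i j)
  · exact posSemidef_sum _ fun i _ => posSemidef_self_mul_conjTranspose (H l k i * Wc i)

lemma zetaC_eq (hσ : 0 < σ2) :
    zetaC σ2 H Wc Wp l k = 2 * (Nu - (Dcmat σ2 H Wc Wp l k
      * (Scmat H Wc l k + Dcmat σ2 H Wc Wp l k)⁻¹).trace.re) := by
  have hdet : IsUnit (Scmat H Wc l k + Dcmat σ2 H Wc Wp l k).det :=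
    isUnit_iff_ne_zero.mpr (posDef_Scmat_add_Dcmat H Wc Wp l k hσ).det_pos.ne'
  have hS : Scmat H Wc l k * (Scmat H Wc l k + Dcmat σ2 H Wc Wp l k)⁻¹
      = 1 - Dcmat σ2 H Wc Wp l k * (Scmat H Wc l k + Dcmat σ2 H Wc Wp l k)⁻¹ := by
    rw [← mul_nonsing_inv _ hdet, ← Matrix.sub_mul, add_sub_cancel_right]
  rw [zetaC, hS, trace_sub, trace_one, Complex.sub_re, Complex.natCast_re, Fintype.card_fin]

lemma zetaC_nonneg (hσ : 0 < σ2) : 0 ≤ zetaC σ2 H Wc Wp l k :=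
  mul_nonneg zero_le_two <| (posDef_Scmat_add_Dcmat H Wc Wp l k hσ).inv.posSemidef
    |>.re_trace_mul_conjTranspose_mul_nonneg (H l k l * Wc l)

variable (Wcb : Fin L → Matrix (Fin NBS) (Fin NBS) ℂ)
  (Wpb : Fin L → Fin K → Matrix (Fin NBS) (Fin NBS) ℂ)

lemma tangentLowerBound_Dcmat (hσ : 0 ≤ σ2) {T Tb : Matrix (Fin Nu) (Fin Nu) ℂ} (hT : T.PosDef)
    (hTb : Tb.IsHermitian) :
    TangentLowerBound T Tb (crossDcmat σ2 H Wcb Wpb Wc Wp l k) (Dcmat σ2 H Wcb Wpb l k)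
      (Dcmat σ2 H Wc Wp l k) := by
  have hnoise :=
    TangentLowerBound.of_mul_conjTranspose hT hTb (1 : Matrix (Fin Nu) (Fin Nu) ℂ) 1
  rw [conjTranspose_one, Matrix.mul_one] at hnoise
  rw [Dcmat_eq_crossDcmat, Dcmat_eq_crossDcmat, crossDcmat, crossDcmat, crossDcmat]
  refine (hnoise.smul hσ).add (.add ?_ ?_)
  · exact .sum _ fun i _ => .sum _ fun j _ =>
      .of_mul_conjTranspose hT hTb (H l k i * Wpb i j) (H l k i * Wp i j)
  · exact .sum _ fun i _ => .of_mul_conjTranspose hT hTb (H l k i * Wcb i) (H l k i * Wc i)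

lemma le_re_trace_inv_mul_crossDcmat (hσ : 0 ≤ σ2) {Tb : Matrix (Fin Nu) (Fin Nu) ℂ}
    (hTb : Tb.PosSemidef) :
    ∑ i : Fin L, ∑ j : Fin K, (Tb⁻¹ * H l k i * Wpb i j * (Wp i j)ᴴ * (H l k i)ᴴ).trace.re
      + ∑ i ∈ Finset.univ.erase l, (Tb⁻¹ * H l k i * Wcb i * (Wc i)ᴴ * (H l k i)ᴴ).trace.re
      ≤ (Tb⁻¹ * crossDcmat σ2 H Wcb Wpb Wc Wp l k).trace.re := by
  have hnoise : 0 ≤ (Tb⁻¹ * ((σ2 : ℂ) • 1)).trace.re := by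
    rw [Matrix.mul_smul, Matrix.mul_one, trace_smul, smul_eq_mul, Complex.re_ofReal_mul]
    exact mul_nonneg hσ hTb.inv.re_trace_nonneg_s9
  rw [crossDcmat, Matrix.mul_add, trace_add, Complex.add_re]
  simp only [Matrix.mul_add, Matrix.mul_sum, trace_add, trace_sum, Complex.add_re,
    Complex.re_sum, conjTranspose_mul, Matrix.mul_assoc]
  linarith

lemma zetaC_le (hσ : 0 < σ2) {Tb : Matrix (Fin Nu) (Fin Nu) ℂ} (hTb : Tb.PosSemidef) :
    zetaC σ2 H Wc Wp l k ≤ 2 * (Nu - (2 * ∑ i : Fin L, ∑ j : Fin K,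
        (Tb⁻¹ * H l k i * Wpb i j * (Wp i j)ᴴ * (H l k i)ᴴ).trace.re
      + 2 * ∑ i ∈ Finset.univ.erase l, (Tb⁻¹ * H l k i * Wcb i * (Wc i)ᴴ * (H l k i)ᴴ).trace.re
      - (Tb⁻¹ * Dcmat σ2 H Wcb Wpb l k * Tb⁻¹
          * (Scmat H Wc l k + Dcmat σ2 H Wc Wp l k)).trace.re)) := by
  have htangent : TangentLowerBound _ Tb _ _ _ := tangentLowerBound_Dcmat H Wc Wp l k Wcb Wpb
    hσ.le (posDef_Scmat_add_Dcmat H Wc Wp l k hσ) hTb.isHermitian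
  have hcross := le_re_trace_inv_mul_crossDcmat H Wc Wp l k Wcb Wpb hσ.le hTb
  rw [zetaC_eq H Wc Wp l k hσ]
  unfold TangentLowerBound at htangent
  linarith

end Covariances

lemma neg_mul_sqrt_div_ge {q z zb N : ℝ} (hq : 0 ≤ q) (hz : 0 ≤ z) (hzb : 0 < zb)
    (h : z ≤ 2 * N) (n : ℝ) :
    -(q * √(z / n)) ≥ -(q * √(zb / (4 * n))) - q * N / √(n * zb) := by
  have hs : 0 < √zb := Real.sqrt_pos.mpr hzb
  -- the tangent line of `√` at `zb`
  have htangent : √z ≤ √zb / 2 + N / √zb := by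
    rw [div_add_div _ _ two_ne_zero hs.ne', le_div_iff₀ (by positivity)]
    nlinarith [sq_nonneg (√z - √zb), Real.sq_sqrt hz, Real.sq_sqrt hzb.le]
  have h4 : √(4 * n) = 2 * √n := by
    rw [Real.sqrt_mul zero_le_four, show (4 : ℝ) = 2 ^ 2 by norm_num, Real.sqrt_sq zero_le_two]
  have hscaled := mul_le_mul_of_nonneg_left htangent (div_nonneg hq (Real.sqrt_nonneg n))
  rw [Real.sqrt_div hz, Real.sqrt_div hzb.le, Real.sqrt_mul' n hzb.le, h4]
  have hlhs : q * (√z / √n) = q / √n * √z := by ring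
  have hrhs : q * (√zb / (2 * √n)) + q * N / (√n * √zb) = q / √n * (√zb / 2 + N / √zb) := by
    ring
  linarith

theorem dispersion_penalty_lower_bound_general {L K Nu NBS : ℕ}
    (σ2 nn qc : ℝ) (hσ : 0 < σ2) (hqc : 0 ≤ qc)
    (H : Fin L → Fin K → Fin L → Matrix (Fin Nu) (Fin NBS) ℂ)
    (Wcb : Fin L → Matrix (Fin NBS) (Fin NBS) ℂ)
    (Wpb : Fin L → Fin K → Matrix (Fin NBS) (Fin NBS) ℂ)
    (l : Fin L) (k : Fin K)
    (hζ : 0 < zetaC σ2 H Wcb Wpb l k)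
    (Wc : Fin L → Matrix (Fin NBS) (Fin NBS) ℂ)
    (Wp : Fin L → Fin K → Matrix (Fin NBS) (Fin NBS) ℂ) :
    -(qc * Real.sqrt (zetaC σ2 H Wc Wp l k / nn)) ≥
      -(qc * Real.sqrt (zetaC σ2 H Wcb Wpb l k / (4 * nn)))
        - qc * (Nu : ℝ) / Real.sqrt (nn * zetaC σ2 H Wcb Wpb l k)
        + (2 * qc / Real.sqrt (nn * zetaC σ2 H Wcb Wpb l k)) *
            ∑ i : Fin L, ∑ j : Fin K,
              (((Scmat H Wcb l k + Dcmat σ2 H Wcb Wpb l k)⁻¹ *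
                  H l k i * Wpb i j * (Wp i j)ᴴ * (H l k i)ᴴ).trace).re
        + (2 * qc / Real.sqrt (nn * zetaC σ2 H Wcb Wpb l k)) *
            ∑ i ∈ Finset.univ.erase l,
              (((Scmat H Wcb l k + Dcmat σ2 H Wcb Wpb l k)⁻¹ *
                  H l k i * Wcb i * (Wc i)ᴴ * (H l k i)ᴴ).trace).re
        - (qc / Real.sqrt (nn * zetaC σ2 H Wcb Wpb l k)) *
            (((Scmat H Wcb l k + Dcmat σ2 H Wcb Wpb l k)⁻¹ *
                Dcmat σ2 H Wcb Wpb l k *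
                (Scmat H Wcb l k + Dcmat σ2 H Wcb Wpb l k)⁻¹ *
                (Scmat H Wc l k + Dcmat σ2 H Wc Wp l k)).trace).re := by
  have hζle := zetaC_le H Wc Wp l k Wcb Wpb hσ
    (posDef_Scmat_add_Dcmat H Wcb Wpb l k hσ).posSemidef
  exact (neg_mul_sqrt_div_ge hqc (zetaC_nonneg H Wc Wp l k hσ) hζ hζle nn).trans_eq' (by ring)

/-- **Equation (41) of the paper.** Concave lower bound on the channel-dispersion
penalty of the common message: with the channels fixed (so `H̄ = H`) and reference
precoders `{W̄} = (Wcb, Wpb)`, assuming `σ² > 0`, `n > 0`, `q_c ≥ 0` and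
`ζ̄_{c,lk} > 0`, for every choice of precoders `{W} = (Wc, Wp)`:
`−q_c √(ζ_{c,lk}/n) ≥ −q_c √(ζ̄_{c,lk}/(4n)) − q_c N_u/√(n ζ̄_{c,lk})
  + (2q_c/√(n ζ̄_{c,lk})) Σ_{ij} Re Tr((S̄_{c,lk}+D̄_{c,lk})⁻¹ H_{lk,i} W̄_{ij} W_{ij}ᴴ H_{lk,i}ᴴ)
  + (2q_c/√(n ζ̄_{c,lk})) Σ_{i≠l} Re Tr((S̄_{c,lk}+D̄_{c,lk})⁻¹ H_{lk,i} W̄_{i} W_{i}ᴴ H_{lk,i}ᴴ)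
  − (q_c/√(n ζ̄_{c,lk})) Re Tr((S̄_{c,lk}+D̄_{c,lk})⁻¹ D̄_{c,lk} (S̄_{c,lk}+D̄_{c,lk})⁻¹ (S_{c,lk}+D_{c,lk}))`,
where `N_u = Tr(I)` is the dimension of the receive space. -/
theorem dispersion_penalty_lower_bound {L K Nu NBS : ℕ}
    (σ2 nn qc : ℝ) (hσ : 0 < σ2) (hn : 0 < nn) (hqc : 0 ≤ qc)
    (H : Fin L → Fin K → Fin L → Matrix (Fin Nu) (Fin NBS) ℂ)
    (Wcb : Fin L → Matrix (Fin NBS) (Fin NBS) ℂ)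
    (Wpb : Fin L → Fin K → Matrix (Fin NBS) (Fin NBS) ℂ)
    (l : Fin L) (k : Fin K)
    (hζ : 0 < zetaC σ2 H Wcb Wpb l k)
    (Wc : Fin L → Matrix (Fin NBS) (Fin NBS) ℂ)
    (Wp : Fin L → Fin K → Matrix (Fin NBS) (Fin NBS) ℂ) :
    -(qc * Real.sqrt (zetaC σ2 H Wc Wp l k / nn)) ≥
      -(qc * Real.sqrt (zetaC σ2 H Wcb Wpb l k / (4 * nn)))
        - qc * (Nu : ℝ) / Real.sqrt (nn * zetaC σ2 H Wcb Wpb l k)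
        + (2 * qc / Real.sqrt (nn * zetaC σ2 H Wcb Wpb l k)) *
            ∑ i : Fin L, ∑ j : Fin K,
              (((Scmat H Wcb l k + Dcmat σ2 H Wcb Wpb l k)⁻¹ *
                  H l k i * Wpb i j * (Wp i j)ᴴ * (H l k i)ᴴ).trace).re
        + (2 * qc / Real.sqrt (nn * zetaC σ2 H Wcb Wpb l k)) *
            ∑ i ∈ Finset.univ.erase l,
              (((Scmat H Wcb l k + Dcmat σ2 H Wcb Wpb l k)⁻¹ *
                  H l k i * Wcb i * (Wc i)ᴴ * (H l k i)ᴴ).trace).re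
        - (qc / Real.sqrt (nn * zetaC σ2 H Wcb Wpb l k)) *
            (((Scmat H Wcb l k + Dcmat σ2 H Wcb Wpb l k)⁻¹ *
                Dcmat σ2 H Wcb Wpb l k *
                (Scmat H Wcb l k + Dcmat σ2 H Wcb Wpb l k)⁻¹ *
                (Scmat H Wc l k + Dcmat σ2 H Wc Wp l k)).trace).re :=
  dispersion_penalty_lower_bound_general σ2 nn qc hσ hqc H Wcb Wpb l k hζ Wc Wp

end RSMA
end
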